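/- Let n ≥ 1 be a natural number. For each m ∈ ℕ, set A_m = {x ∈ K_n : max_j x_j = n and x_j < n for every j ∉ {2m−1, 2m}}, u_m = n·e_{2m−1} + (n−1)·e_{2m}, and v_m = (n−1)·e_{2m−1} + n·e_{2m}. Then the sets A₁, A₂, … are pairwise disjoint, u_m, v_m ∈ A_m, d(u_m, v_m) = 1, and for every m: (i) d(x,y) + d(u_m,v_m) ≤ d(x,u_m) + d(y,v_m) for all x, y ∈ K_n ∖ A_m, and (ii) d(x,y) + d(z,w) + 2·d(u_m,v_m) ≤ d(x,u_m) + d(y,u_m) + d(z,v_m) + d(w,v_m) for all x, y, z, w ∈ K_n ∖ A_m. -/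

import Mathlib

/-- The metric space `Kn n`: all sequences with terms in `{0, 1, …, n}`, viewed as a metric
subspace of `ℓ∞` (bounded functions `ℕ → ℝ` with the supremum metric). -/
def Kn (n : ℕ) : Type :=
  {x : BoundedContinuousFunction ℕ ℝ // ∀ j : ℕ, ∃ k : ℕ, k ≤ n ∧ x j = k}

noncomputable instance (n : ℕ) : MetricSpace (Kn n) := Subtype.metricSpace

/-- The element of `Kn n` given by a sequence of naturals bounded by `n`. -/
noncomputable def Kn.mk (n : ℕ) (f : ℕ → ℕ) (hf : ∀ j, f j ≤ n) : Kn n :=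
  ⟨BoundedContinuousFunction.mkOfBound
      ⟨fun j => (f j : ℝ), continuous_of_discreteTopology⟩ n
      (fun x y => by
        have h1 : (0 : ℝ) ≤ f x := Nat.cast_nonneg _
        have h2 : (0 : ℝ) ≤ f y := Nat.cast_nonneg _
        have h3 : (f x : ℝ) ≤ n := Nat.cast_le.2 (hf x)
        have h4 : (f y : ℝ) ≤ n := Nat.cast_le.2 (hf y)
        simp only [ContinuousMap.coe_mk, Real.dist_eq, abs_sub_le_iff]
        constructor <;> linarith),
    fun j => ⟨f j, hf j, rfl⟩⟩

/-- `KnA n m = {x ∈ Kn n : max_j x_j = n and x_j < n for every j ∉ {2m-1, 2m}}`. -/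
def KnA (n m : ℕ) : Set (Kn n) :=
  {x | (⨆ j, x.1 j) = (n : ℝ) ∧ ∀ j : ℕ, j ≠ 2 * m - 1 → j ≠ 2 * m → x.1 j < (n : ℝ)}

/-- `u_m = n·e_{2m-1} + (n-1)·e_{2m}`. -/
noncomputable def Knu (n m : ℕ) : Kn n :=
  Kn.mk n (fun j => if j = 2 * m - 1 then n else if j = 2 * m then n - 1 else 0)
    (by intro j; split_ifs <;> omega)

/-- `v_m = (n-1)·e_{2m-1} + n·e_{2m}`. -/
noncomputable def Knv (n m : ℕ) : Kn n :=
  Kn.mk n (fun j => if j = 2 * m - 1 then n - 1 else if j = 2 * m then n else 0)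
    (by intro j; split_ifs <;> omega)

/-!
Points of `Kn n` are integer sequences, so distinct points are at distance at least `1`, and every
distance is at most `n`. Both trapezoid inequalities follow from
`d(x, y) + 1 ≤ d(x, p) + d(y, q)` for `x, y ∉ A_m` and `p, q ∈ {u_m, v_m}`, which in turn follows
from `d(x, y) ≤ max (d(x, p)) (d(y, q))`. If `x` (or `y`) takes the value `n` off `{2m-1, 2m}`,
it is already at distance `n` from `p`. Otherwise `x` and `y` are bounded by `n - 1`, so in each
coordinate `p` and `q` lie on the same side of both `x_j` and `y_j` (below them off `{2m-1, 2m}`,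
above them on it), which bounds `|x_j - y_j|` by `|x_j - p_j|` or `|y_j - q_j|`.
-/

lemma abs_sub_le_max_abs_sub_of_same_side {a b c d : ℝ}
    (h : (c ≤ min a b ∧ d ≤ min a b) ∨ (max a b ≤ c ∧ max a b ≤ d)) :
    |a - b| ≤ max |a - c| |b - d| := by
  rcases le_total a b with hab | hab
  · rw [abs_of_nonpos (sub_nonpos.2 hab)]
    rw [min_eq_left hab, max_eq_right hab] at h
    rcases h with ⟨-, hd⟩ | ⟨hc, -⟩
    · exact le_max_of_le_right (by linarith [le_abs_self (b - d)])
    · exact le_max_of_le_left (by linarith [neg_abs_le (a - c)])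
  · rw [abs_of_nonneg (sub_nonneg.2 hab)]
    rw [min_eq_right hab, max_eq_left hab] at h
    rcases h with ⟨hc, -⟩ | ⟨-, hd⟩
    · exact le_max_of_le_left (by linarith [le_abs_self (a - c)])
    · exact le_max_of_le_right (by linarith [neg_abs_le (b - d)])

namespace Kn

variable {n : ℕ}

lemma coord_nonneg (x : Kn n) (j : ℕ) : 0 ≤ x.1 j := by
  obtain ⟨k, -, hk⟩ := x.2 j
  rw [hk]
  exact k.cast_nonneg

lemma coord_le (x : Kn n) (j : ℕ) : x.1 j ≤ n := by
  obtain ⟨k, hkn, hk⟩ := x.2 j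
  rw [hk]
  exact_mod_cast hkn

lemma coord_le_sub_one_of_ne (x : Kn n) {j : ℕ} (h : x.1 j ≠ n) : x.1 j ≤ n - 1 := by
  obtain ⟨k, hkn, hk⟩ := x.2 j
  rw [hk] at h ⊢
  have hk1 : k + 1 ≤ n := by
    have : k ≠ n := by exact_mod_cast h
    omega
  have : ((k + 1 : ℕ) : ℝ) ≤ n := by exact_mod_cast hk1
  push_cast at this
  linarith

lemma abs_sub_le_dist (x y : Kn n) (j : ℕ) : |x.1 j - y.1 j| ≤ dist x y := by
  rw [← Real.dist_eq]
  exact BoundedContinuousFunction.dist_coe_le_dist (f := x.1) (g := y.1) j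

lemma dist_le_of_forall_abs_sub_le {x y : Kn n} {C : ℝ} (hC : 0 ≤ C)
    (h : ∀ j, |x.1 j - y.1 j| ≤ C) : dist x y ≤ C :=
  (BoundedContinuousFunction.dist_le (f := x.1) (g := y.1) hC).2 fun j => by
    rw [Real.dist_eq]
    exact h j

lemma dist_le_nat (x y : Kn n) : dist x y ≤ n :=
  dist_le_of_forall_abs_sub_le n.cast_nonneg fun j =>
    abs_sub_le_iff.2 ⟨by linarith [coord_le x j, coord_nonneg y j],
      by linarith [coord_le y j, coord_nonneg x j]⟩

lemma one_le_dist_of_ne {x y : Kn n} (h : x ≠ y) : 1 ≤ dist x y := by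
  obtain ⟨j, hj⟩ : ∃ j, x.1 j ≠ y.1 j := by
    by_contra! hc
    exact h (Subtype.ext (BoundedContinuousFunction.ext hc))
  refine le_trans ?_ (abs_sub_le_dist x y j)
  obtain ⟨a, -, ha⟩ := x.2 j
  obtain ⟨b, -, hb⟩ := y.2 j
  rw [ha, hb] at hj ⊢
  rcases Nat.lt_or_gt_of_ne (fun hab => hj (congrArg Nat.cast hab)) with hab | hab
  · have : (a : ℝ) + 1 ≤ b := by exact_mod_cast hab
    rw [abs_sub_comm, abs_of_nonneg (by linarith)]
    linarith
  · have : (b : ℝ) + 1 ≤ a := by exact_mod_cast hab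
    rw [abs_of_nonneg (by linarith)]
    linarith

lemma iSup_coord_eq_of_coord_eq (x : Kn n) {j : ℕ} (hj : x.1 j = n) : (⨆ i, x.1 i) = n :=
  le_antisymm (ciSup_le (coord_le x))
    (hj ▸ le_ciSup (f := fun i => x.1 i) ⟨n, Set.forall_mem_range.2 (coord_le x)⟩ j)

lemma exists_coord_eq_of_mem_KnA {m : ℕ} {x : Kn n} (hx : x ∈ KnA n m) : ∃ j, x.1 j = n := by
  by_contra! h
  have : (⨆ j, x.1 j) ≤ n - 1 := ciSup_le fun j => coord_le_sub_one_of_ne x (h j)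
  linarith [hx.1]

lemma KnA_disjoint {m k : ℕ} (hmk : m ≠ k) :
    Disjoint (KnA n m) (KnA n k) := by
  refine Set.disjoint_left.2 fun x hxm hxk => ?_
  obtain ⟨j, hj⟩ := exists_coord_eq_of_mem_KnA hxm
  have hjm : ¬(j ≠ 2 * m - 1 ∧ j ≠ 2 * m) := fun h => (hxm.2 j h.1 h.2).ne hj
  have hjk : ¬(j ≠ 2 * k - 1 ∧ j ≠ 2 * k) := fun h => (hxk.2 j h.1 h.2).ne hj
  omega

lemma exists_coord_eq_or_forall_le_of_notMem_KnA {m : ℕ} {x : Kn n} (hx : x ∉ KnA n m) :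
    (∃ j, j ≠ 2 * m - 1 ∧ j ≠ 2 * m ∧ x.1 j = n) ∨ ∀ j, x.1 j ≤ n - 1 := by
  by_cases h : ∃ i, x.1 i = n
  · obtain ⟨i, hi⟩ := h
    have : ¬∀ j, j ≠ 2 * m - 1 → j ≠ 2 * m → x.1 j < n :=
      fun h => hx ⟨iSup_coord_eq_of_coord_eq x hi, h⟩
    push Not at this
    obtain ⟨j, h1, h2, hj⟩ := this
    exact Or.inl ⟨j, h1, h2, le_antisymm (coord_le x j) hj⟩
  · push Not at h
    exact Or.inr fun j => coord_le_sub_one_of_ne x (h j)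

structure IsPeak (m : ℕ) (p : Kn n) : Prop where
  mem : p ∈ KnA n m
  sub_one_le_left : (n : ℝ) - 1 ≤ p.1 (2 * m - 1)
  sub_one_le_right : (n : ℝ) - 1 ≤ p.1 (2 * m)
  eq_zero : ∀ j, j ≠ 2 * m - 1 → j ≠ 2 * m → p.1 j = 0

lemma IsPeak.sub_one_le {m : ℕ} {p : Kn n} (hp : IsPeak m p) {j : ℕ}
    (hj : j = 2 * m - 1 ∨ j = 2 * m) : (n : ℝ) - 1 ≤ p.1 j := by
  rcases hj with rfl | rfl
  exacts [hp.sub_one_le_left, hp.sub_one_le_right]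

lemma Knu_apply (m j : ℕ) : (Knu n m).1 j =
    ((if j = 2 * m - 1 then n else if j = 2 * m then n - 1 else 0 : ℕ) : ℝ) := rfl

lemma Knv_apply (m j : ℕ) : (Knv n m).1 j =
    ((if j = 2 * m - 1 then n - 1 else if j = 2 * m then n else 0 : ℕ) : ℝ) := rfl

lemma isPeak_Knu (hn : 1 ≤ n) (m : ℕ) : IsPeak m (Knu n m) where
  mem := ⟨iSup_coord_eq_of_coord_eq _ (j := 2 * m - 1) (by simp [Knu_apply]),
    fun j h1 h2 => by simpa [Knu_apply, h1, h2] using Nat.succ_le_iff.1 hn⟩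
  sub_one_le_left := by simp [Knu_apply]
  sub_one_le_right := by simp only [Knu_apply]; split_ifs <;> push_cast [hn] <;> linarith
  eq_zero j h1 h2 := by simp [Knu_apply, h1, h2]

lemma isPeak_Knv (hn : 1 ≤ n) {m : ℕ} (hm : 1 ≤ m) : IsPeak m (Knv n m) where
  mem := ⟨iSup_coord_eq_of_coord_eq _ (j := 2 * m)
      (by rw [Knv_apply, if_neg (by omega), if_pos rfl]),
    fun j h1 h2 => by simpa [Knv_apply, h1, h2] using Nat.succ_le_iff.1 hn⟩
  sub_one_le_left := by simp [Knv_apply, hn]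
  sub_one_le_right := by simp only [Knv_apply]; split_ifs <;> push_cast [hn] <;> linarith
  eq_zero j h1 h2 := by simp [Knv_apply, h1, h2]

lemma Knu_ne_Knv (hn : 1 ≤ n) (m : ℕ) : Knu n m ≠ Knv n m := fun h => by
  have := congrArg (fun z : Kn n => z.1 (2 * m - 1)) h
  simp only [Knu_apply, Knv_apply, if_true, Nat.cast_inj] at this
  omega

lemma dist_le_one_of_isPeak {m : ℕ} {p q : Kn n} (hp : IsPeak m p) (hq : IsPeak m q) :
    dist p q ≤ 1 := by
  refine dist_le_of_forall_abs_sub_le zero_le_one fun j => abs_sub_le_iff.2 ?_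
  by_cases hj : j = 2 * m - 1 ∨ j = 2 * m
  · have hpj := hp.sub_one_le hj
    have hqj := hq.sub_one_le hj
    constructor <;> linarith [coord_le p j, coord_le q j]
  · push Not at hj
    simp [hp.eq_zero j hj.1 hj.2, hq.eq_zero j hj.1 hj.2]

lemma dist_le_dist_of_coord_eq {m : ℕ} {x p : Kn n} (hp : IsPeak m p) {j : ℕ}
    (h1 : j ≠ 2 * m - 1) (h2 : j ≠ 2 * m) (hxj : x.1 j = n) (y : Kn n) :
    dist x y ≤ dist x p := by
  refine (dist_le_nat x y).trans ?_
  simpa [hxj, hp.eq_zero j h1 h2] using abs_sub_le_dist x p j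

lemma dist_le_max_of_isPeak {m : ℕ} {x y p q : Kn n} (hx : x ∉ KnA n m) (hy : y ∉ KnA n m)
    (hp : IsPeak m p) (hq : IsPeak m q) : dist x y ≤ max (dist x p) (dist y q) := by
  rcases exists_coord_eq_or_forall_le_of_notMem_KnA hx with ⟨j, h1, h2, hxj⟩ | hx'
  · exact le_max_of_le_left (dist_le_dist_of_coord_eq hp h1 h2 hxj y)
  rcases exists_coord_eq_or_forall_le_of_notMem_KnA hy with ⟨j, h1, h2, hyj⟩ | hy'
  · exact le_max_of_le_right (dist_comm x y ▸ dist_le_dist_of_coord_eq hq h1 h2 hyj x)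
  refine dist_le_of_forall_abs_sub_le (le_max_of_le_left dist_nonneg) fun j => ?_
  refine (abs_sub_le_max_abs_sub_of_same_side ?_).trans
    (max_le_max (abs_sub_le_dist x p j) (abs_sub_le_dist y q j))
  by_cases hj : j = 2 * m - 1 ∨ j = 2 * m
  · have hpj := hp.sub_one_le hj
    have hqj := hq.sub_one_le hj
    exact Or.inr ⟨max_le ((hx' j).trans hpj) ((hy' j).trans hpj),
      max_le ((hx' j).trans hqj) ((hy' j).trans hqj)⟩
  · push Not at hj
    rw [hp.eq_zero j hj.1 hj.2, hq.eq_zero j hj.1 hj.2]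
    exact Or.inl ⟨le_min (coord_nonneg x j) (coord_nonneg y j),
      le_min (coord_nonneg x j) (coord_nonneg y j)⟩

lemma dist_add_one_le_of_isPeak {m : ℕ} {x y p q : Kn n} (hx : x ∉ KnA n m) (hy : y ∉ KnA n m)
    (hp : IsPeak m p) (hq : IsPeak m q) : dist x y + 1 ≤ dist x p + dist y q := by
  have hxp := one_le_dist_of_ne fun h : x = p => hx (h ▸ hp.mem)
  have hyq := one_le_dist_of_ne fun h : y = q => hy (h ▸ hq.mem)
  rcases le_max_iff.1 (dist_le_max_of_isPeak hx hy hp hq) with h | h <;> linarith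

end Kn

open Kn in
/-- For every `n ≥ 1`: the sets `KnA n 1, KnA n 2, …` are pairwise disjoint, and for every
`m ≥ 1` one has `u_m, v_m ∈ A_m`, `d(u_m, v_m) = 1`, and the (ε-free) long trapezoid
inequalities hold for all points outside `A_m`. -/
theorem Kn_trapezoid (n : ℕ) (hn : 1 ≤ n) :
    (∀ m k : ℕ, 1 ≤ m → 1 ≤ k → m ≠ k → Disjoint (KnA n m) (KnA n k)) ∧
    ∀ m : ℕ, 1 ≤ m →
      Knu n m ∈ KnA n m ∧ Knv n m ∈ KnA n m ∧ Knu n m ≠ Knv n m ∧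
      dist (Knu n m) (Knv n m) = 1 ∧
      (∀ x ∉ KnA n m, ∀ y ∉ KnA n m,
        dist x y + dist (Knu n m) (Knv n m) ≤ dist x (Knu n m) + dist y (Knv n m)) ∧
      (∀ x ∉ KnA n m, ∀ y ∉ KnA n m, ∀ z ∉ KnA n m, ∀ w ∉ KnA n m,
        dist x y + dist z w + 2 * dist (Knu n m) (Knv n m) ≤
          dist x (Knu n m) + dist y (Knu n m) + dist z (Knv n m) + dist w (Knv n m)) := by
  refine ⟨fun _ _ _ _ hmk => KnA_disjoint hmk, fun m hm => ?_⟩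
  have hu := isPeak_Knu hn m
  have hv := isPeak_Knv hn hm
  have huv := Knu_ne_Knv hn m
  have hd : dist (Knu n m) (Knv n m) = 1 :=
    le_antisymm (dist_le_one_of_isPeak hu hv) (one_le_dist_of_ne huv)
  refine ⟨hu.mem, hv.mem, huv, hd, fun x hx y hy => ?_, fun x hx y hy z hz w hw => ?_⟩
  · rw [hd]
    exact dist_add_one_le_of_isPeak hx hy hu hv
  · have hxy := dist_add_one_le_of_isPeak hx hy hu hu
    have hzw := dist_add_one_le_of_isPeak hz hw hv hv
    linarith
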